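/- Suppose χ/ω ∈ L^{3,∞}(ℝ³). If F ∈ L^{3,2}(ℝ³), then the function (k,k') ↦ F(k−k') · (χ(k)/ω(k)) · (χ(k')/ω(k')) lies in L²(ℝ³ × ℝ³), with L² norm bounded by a constant times ‖χ/ω‖²_{L^{3,∞}} ‖F‖_{L^{3,2}}. -/

import Mathlib

open MeasureTheory ENNReal Filter Complex
open scoped FourierTransform ComplexConjugate

noncomputable section

abbrev Euc (d : ℕ) := EuclideanSpace ℝ (Fin d)

/-- The Lorentz `L^{p,q}` quasi-norm on `ℝ^d`:
`‖f‖_{L^{p,q}} = p^{1/q} ‖ |{|f|>t}|^{1/p} t ‖_{L^q((0,∞), dt/t)}`,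
with the supremum expression for `q = ∞`. -/
def lorentzNorm {d : ℕ} (p : ℝ) (q : ℝ≥0∞) (f : Euc d → ℂ) : ℝ≥0∞ :=
  if q = ⊤ then
    ⨆ t ∈ Set.Ioi (0 : ℝ), (volume {k | t < ‖f k‖}) ^ (1 / p) * ENNReal.ofReal t
  else
    ENNReal.ofReal p ^ (1 / q.toReal) *
      (∫⁻ t in Set.Ioi (0 : ℝ),
        ((volume {k | t < ‖f k‖}) ^ (1 / p) * ENNReal.ofReal t) ^ q.toReal
          / ENNReal.ofReal t) ^ (1 / q.toReal)

end

/-!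
After squaring, the claim bounds `∫∫ |F(k - k')|² h(k) h(k')` with `h = |χ/ω|²`, whose level
sets satisfy `|{h > s}| ≤ A³ s^{-3/2}` for `A = ‖χ/ω‖_{L^{3,∞}}`. The layer-cake formula in `|F|`
reduces this to the sets `E = {|F| > t}`: it suffices that
`∫∫_{k - k' ∈ E} h(k) h(k') ≤ 36 A⁴ |E|^{2/3}`, because `∫ 2t |{|F| > t}|^{2/3} dt` is
`‖F‖²_{L^{3,2}}` up to the factor `2/3`.

Applying the layer-cake formula to both factors `h`, the left side becomes the double integral over
levels `s, s'` of `|{(k, k') : k ∈ H_s, k' ∈ H_{s'}, k - k' ∈ E}|`, where `H_s = {h > s}`. By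
translation invariance this is at most `min(|H_s| |H_{s'}|, |E| min(|H_s|, |H_{s'}|))`, which is
dominated by the product `φ(|H_s|) φ(|H_{s'}|)` with `φ(x) = min(x, √(|E| x))`. So the double
integral factorizes, and
`∫ φ(|H_s|) ds ≤ ∫ min(A³ s^{-3/2}, √(|E| A³) s^{-3/4}) ds = 6 A² |E|^{1/3}`.
-/

open Set

lemma le_rpow_half_of_mul_self_le {x y : ℝ≥0∞} (h : x * x ≤ y) : x ≤ y ^ (2⁻¹ : ℝ) := by
  rw [ENNReal.le_rpow_inv_iff two_pos, ENNReal.rpow_two, sq]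
  exact h

lemma rpow_half_le_of_le_mul_self {x y : ℝ≥0∞} (h : y ≤ x * x) : y ^ (2⁻¹ : ℝ) ≤ x := by
  rw [ENNReal.rpow_inv_le_iff two_pos, ENNReal.rpow_two, sq]
  exact h

lemma min_mul_mul_min_le (m x y : ℝ≥0∞) :
    min (x * y) (m * min x y) ≤ min x ((m * x) ^ (2⁻¹ : ℝ)) * min y ((m * y) ^ (2⁻¹ : ℝ)) := by
  wlog hxy : x ≤ y generalizing x y
  · simpa only [mul_comm, min_comm x y] using this y x (le_of_not_ge hxy)
  rw [min_eq_left hxy]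
  rcases le_total y m with hym | hmy
  · calc min (x * y) (m * x) ≤ x * y := min_le_left _ _
      _ ≤ _ := by
        gcongr
        · exact le_min le_rfl (le_rpow_half_of_mul_self_le (by gcongr; exact hxy.trans hym))
        · exact le_min le_rfl (le_rpow_half_of_mul_self_le (by gcongr))
  rcases le_total x m with hxm | hmx
  · calc min (x * y) (m * x) ≤ x * m := (min_le_right _ _).trans_eq (mul_comm _ _)
      _ ≤ _ := by
        gcongr
        · exact le_min le_rfl (le_rpow_half_of_mul_self_le (by gcongr))
        · exact le_min hmy (le_rpow_half_of_mul_self_le (by gcongr))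
  · have hsq : (m * x) ^ (2⁻¹ : ℝ) * (m * x) ^ (2⁻¹ : ℝ) = m * x := by
      rw [← ENNReal.rpow_add_of_nonneg _ _ (by norm_num) (by norm_num)]; norm_num
    calc min (x * y) (m * x) ≤ (m * x) ^ (2⁻¹ : ℝ) * (m * x) ^ (2⁻¹ : ℝ) :=
          (min_le_right _ _).trans_eq hsq.symm
      _ ≤ _ := by
        gcongr
        · exact le_min (rpow_half_le_of_le_mul_self (by gcongr)) le_rfl
        · exact le_min (rpow_half_le_of_le_mul_self (by gcongr)) (by gcongr)

lemma lintegral_ofReal_mul_ofReal_eq_lintegral_lintegral_meas_lt {α : Type*}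
    [MeasurableSpace α] (ν : Measure α) {f g : α → ℝ} (hf : Measurable f) (hg : Measurable g)
    (hf0 : 0 ≤ f) (hg0 : 0 ≤ g) :
    ∫⁻ a, ENNReal.ofReal (f a) * ENNReal.ofReal (g a) ∂ν
      = ∫⁻ s in Ioi 0, ∫⁻ s' in Ioi 0, ν ({a | s < f a} ∩ {a | s' < g a}) := by
  calc ∫⁻ a, ENNReal.ofReal (f a) * ENNReal.ofReal (g a) ∂ν
      = ∫⁻ a, ENNReal.ofReal (f a) ∂(ν.withDensity fun a => ENNReal.ofReal (g a)) := by
        rw [lintegral_withDensity_eq_lintegral_mul _ (by fun_prop) (by fun_prop)]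
        simp only [Pi.mul_apply, mul_comm]
    _ = ∫⁻ s in Ioi 0, ∫⁻ a in {a | s < f a}, ENNReal.ofReal (g a) ∂ν := by
        rw [lintegral_eq_lintegral_meas_lt _ (.of_forall hf0) hf.aemeasurable]
        refine setLIntegral_congr_fun measurableSet_Ioi fun s _ => ?_
        exact withDensity_apply _ (measurableSet_lt measurable_const hf)
    _ = ∫⁻ s in Ioi 0, ∫⁻ s' in Ioi 0, ν ({a | s < f a} ∩ {a | s' < g a}) := by
        refine setLIntegral_congr_fun measurableSet_Ioi fun s _ => ?_
        rw [lintegral_eq_lintegral_meas_lt _ (.of_forall hg0) hg.aemeasurable]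
        refine setLIntegral_congr_fun measurableSet_Ioi fun s' _ => ?_
        rw [Measure.restrict_apply (measurableSet_lt measurable_const hg), inter_comm]

lemma lintegral_Ioi_rpow_neg_three_halves {s₀ : ℝ} (hs₀ : 0 < s₀) :
    ∫⁻ s in Ioi s₀, ENNReal.ofReal (s ^ (-(3/2) : ℝ))
      = ENNReal.ofReal (2 * s₀ ^ (-(1/2) : ℝ)) := by
  rw [← ofReal_integral_eq_lintegral_ofReal (integrableOn_Ioi_rpow_of_lt (by norm_num) hs₀)
    (ae_restrict_of_forall_mem measurableSet_Ioi fun s hs => Real.rpow_nonneg (hs₀.trans hs).le _),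
    integral_Ioi_rpow_of_lt (by norm_num) hs₀]
  congr 1
  norm_num
  ring

lemma lintegral_Ioc_rpow_neg_three_quarters {s₀ : ℝ} (hs₀ : 0 < s₀) :
    ∫⁻ s in Ioc 0 s₀, ENNReal.ofReal (s ^ (-(3/4) : ℝ)) = ENNReal.ofReal (4 * s₀ ^ (1/4 : ℝ)) := by
  rw [← ofReal_integral_eq_lintegral_ofReal
    (intervalIntegral.intervalIntegrable_rpow' (by norm_num)).1
    (ae_restrict_of_forall_mem measurableSet_Ioc fun s hs => Real.rpow_nonneg hs.1.le _),
    ← intervalIntegral.integral_of_le hs₀.le, integral_rpow (.inl (by norm_num)),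
    Real.zero_rpow (by norm_num)]
  congr 1
  norm_num
  ring

lemma exists_ofReal_pow_three_eq {a : ℝ≥0∞} (ha0 : a ≠ 0) (hat : a ≠ ⊤) :
    ∃ u : ℝ, 0 < u ∧ a = ENNReal.ofReal (u ^ 3) := by
  refine ⟨a.toReal ^ (1/3 : ℝ), Real.rpow_pos_of_pos (toReal_pos ha0 hat) _, ?_⟩
  rw [← Real.rpow_natCast, ← Real.rpow_mul toReal_nonneg]
  norm_num [ENNReal.ofReal_toReal hat]

lemma lintegral_min_rpow_le (a b : ℝ≥0∞) :
    ∫⁻ s in Ioi 0, min (a * ENNReal.ofReal (s ^ (-(3/2) : ℝ)))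
        (b * ENNReal.ofReal (s ^ (-(3/4) : ℝ)))
      ≤ 6 * a ^ (1/3 : ℝ) * b ^ (2/3 : ℝ) := by
  rcases eq_or_ne a 0 with rfl | ha0
  · simp
  rcases eq_or_ne b 0 with rfl | hb0
  · simp
  rcases eq_or_ne a ⊤ with rfl | hat
  · refine le_top.trans_eq ?_
    rw [top_rpow_of_pos (by norm_num), mul_top (by norm_num),
      top_mul (rpow_pos_of_nonneg hb0.bot_lt (by norm_num)).ne']
  rcases eq_or_ne b ⊤ with rfl | hbt
  · refine le_top.trans_eq ?_
    rw [top_rpow_of_pos (by norm_num),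
      mul_top (mul_ne_zero (by norm_num) (rpow_pos_of_nonneg ha0.bot_lt (by norm_num)).ne')]
  obtain ⟨u, hu, rfl⟩ := exists_ofReal_pow_three_eq ha0 hat
  obtain ⟨v, hv, rfl⟩ := exists_ofReal_pow_three_eq hb0 hbt
  -- the two terms of the minimum cross at `s₀ = (u / v) ^ 4`
  have hs₀ : 0 < (u / v) ^ 4 := by positivity
  calc _ ≤ (∫⁻ s in Ioc 0 ((u / v) ^ 4),
            ENNReal.ofReal (v ^ 3) * ENNReal.ofReal (s ^ (-(3/4) : ℝ)))
        + ∫⁻ s in Ioi ((u / v) ^ 4),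
            ENNReal.ofReal (u ^ 3) * ENNReal.ofReal (s ^ (-(3/2) : ℝ)) := by
        rw [← Ioc_union_Ioi_eq_Ioi hs₀.le, lintegral_union measurableSet_Ioi Ioc_disjoint_Ioi_same]
        exact add_le_add (lintegral_mono fun s => min_le_right _ _)
          (lintegral_mono fun s => min_le_left _ _)
    _ = ENNReal.ofReal (6 * u * v ^ 2) := by
        have h₁ : ((u / v) ^ 4) ^ (1/4 : ℝ) = u / v := by
          rw [← Real.rpow_natCast, ← Real.rpow_mul (by positivity)]; norm_num
        have h₂ : ((u / v) ^ 4) ^ (-(1/2) : ℝ) = (v / u) ^ 2 := by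
          rw [← Real.rpow_natCast, ← Real.rpow_mul (by positivity)]
          norm_num [Real.rpow_neg (by positivity : (0:ℝ) ≤ u / v), ← inv_pow]
        rw [lintegral_const_mul' _ _ ENNReal.ofReal_ne_top,
          lintegral_const_mul' _ _ ENNReal.ofReal_ne_top,
          lintegral_Ioc_rpow_neg_three_quarters hs₀, lintegral_Ioi_rpow_neg_three_halves hs₀,
          ← ENNReal.ofReal_mul (by positivity), ← ENNReal.ofReal_mul (by positivity),
          ← ENNReal.ofReal_add (by positivity) (by positivity), h₁, h₂]
        congr 1
        field_simp
        ring
    _ = _ := by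
        have h₃ : (u ^ 3) ^ (1/3 : ℝ) = u := by
          rw [← Real.rpow_natCast, ← Real.rpow_mul hu.le]; norm_num
        have h₄ : (v ^ 3) ^ (2/3 : ℝ) = v ^ 2 := by
          rw [← Real.rpow_natCast, ← Real.rpow_mul hv.le]; norm_num
        rw [ENNReal.ofReal_rpow_of_nonneg (by positivity) (by norm_num),
          ENNReal.ofReal_rpow_of_nonneg (by positivity) (by norm_num), h₃, h₄,
          ← ENNReal.ofReal_ofNat 6, ← ENNReal.ofReal_mul (by norm_num),
          ← ENNReal.ofReal_mul (by positivity)]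

lemma measure_lt_norm_sq_le {α V : Type*} [MeasurableSpace α] [NormedAddCommGroup V]
    {μ : Measure α} {g : α → V} {A : ℝ≥0∞}
    (hA : ∀ t > 0, μ {x | t < ‖g x‖} ^ (1/3 : ℝ) * ENNReal.ofReal t ≤ A) {s : ℝ} (hs : 0 < s) :
    μ {x | s < ‖g x‖ ^ 2} ≤ A ^ 3 * ENNReal.ofReal (s ^ (-(3/2) : ℝ)) := by
  have hr : 0 < √s := Real.sqrt_pos.2 hs
  have hset : {x | s < ‖g x‖ ^ 2} = {x | √s < ‖g x‖} := by
    ext x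
    exact (Real.sqrt_lt hs.le (norm_nonneg _)).symm
  have hcube : μ {x | √s < ‖g x‖} * ENNReal.ofReal √s ^ 3 ≤ A ^ 3 := by
    calc _ = (μ {x | √s < ‖g x‖} ^ (1/3 : ℝ) * ENNReal.ofReal √s) ^ 3 := by
          rw [mul_pow, ← rpow_mul_natCast]; norm_num
      _ ≤ A ^ 3 := pow_le_pow_left' (hA _ hr) 3
  have hpow : (ENNReal.ofReal √s ^ 3)⁻¹ = ENNReal.ofReal (s ^ (-(3/2) : ℝ)) := by
    rw [← ENNReal.ofReal_pow hr.le, ← ENNReal.ofReal_inv_of_pos (by positivity),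
      Real.sqrt_eq_rpow, ← Real.rpow_natCast, ← Real.rpow_mul hs.le, ← Real.rpow_neg hs.le]
    norm_num
  rw [hset, ← hpow, ← div_eq_mul_inv]
  exact (ENNReal.le_div_iff_mul_le (.inl (by positivity)) (.inl (by finiteness))).2 hcube

section DifferenceSets

variable {G : Type*} [MeasurableSpace G] [AddCommGroup G] [MeasurableAdd₂ G] [MeasurableNeg G]
  {μ : Measure G} [SFinite μ] [μ.IsAddRightInvariant]

lemma measure_prod_inter_sub_preimage_le_left (S S' : Set G) {E : Set G} (hE : MeasurableSet E)
    (hS' : MeasurableSet S') :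
    (μ.prod μ) (S ×ˢ S' ∩ (fun p => p.1 - p.2) ⁻¹' E) ≤ μ E * μ S' := by
  calc (μ.prod μ) (S ×ˢ S' ∩ (fun p => p.1 - p.2) ⁻¹' E)
      ≤ (μ.prod μ) ((fun p : G × G => (p.1 - p.2, p.2)) ⁻¹' (E ×ˢ S')) :=
        measure_mono fun p hp => ⟨hp.2, hp.1.2⟩
    _ = μ E * μ S' := by
        rw [(measurePreserving_sub_prod μ μ).measure_preimage
          (hE.prod hS').nullMeasurableSet, Measure.prod_prod]

variable [μ.IsNegInvariant]

lemma measure_prod_inter_sub_preimage_le_right (S S' : Set G) {E : Set G}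
    (hE : MeasurableSet E) (hS : MeasurableSet S) :
    (μ.prod μ) (S ×ˢ S' ∩ (fun p => p.1 - p.2) ⁻¹' E) ≤ μ S * μ E := by
  calc (μ.prod μ) (S ×ˢ S' ∩ (fun p => p.1 - p.2) ⁻¹' E)
      ≤ (μ.prod μ) ((fun p : G × G => (p.1, p.2 - p.1)) ⁻¹' (S ×ˢ (-E))) :=
        measure_mono fun p hp => ⟨hp.1.1, by simpa using hp.2⟩
    _ = μ S * μ E := by
        rw [(measurePreserving_prod_sub μ μ).measure_preimage
          (hS.prod hE.neg).nullMeasurableSet, Measure.prod_prod, Measure.measure_neg]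

lemma measure_prod_inter_sub_preimage_le {S S' E : Set G} (hS : MeasurableSet S)
    (hS' : MeasurableSet S') (hE : MeasurableSet E) :
    (μ.prod μ) (S ×ˢ S' ∩ (fun p => p.1 - p.2) ⁻¹' E) ≤
      min (μ S) ((μ E * μ S) ^ (2⁻¹ : ℝ)) * min (μ S') ((μ E * μ S') ^ (2⁻¹ : ℝ)) := by
  refine le_trans ?_ (min_mul_mul_min_le _ _ _)
  refine le_min (measure_mono inter_subset_left |>.trans_eq (Measure.prod_prod _ _)) ?_
  rw [mul_min]
  exact le_min ((measure_prod_inter_sub_preimage_le_right S S' hE hS).trans_eq (mul_comm _ _))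
    (measure_prod_inter_sub_preimage_le_left S S' hE hS')

variable {V : Type*} [NormedAddCommGroup V] [MeasurableSpace V] [OpensMeasurableSpace V]
  {g : G → V} {A : ℝ≥0∞}

theorem setLIntegral_sub_preimage_le (hg : Measurable g)
    (hA : ∀ t > 0, μ {x | t < ‖g x‖} ^ (1/3 : ℝ) * ENNReal.ofReal t ≤ A)
    {E : Set G} (hE : MeasurableSet E) :
    ∫⁻ p in (fun p : G × G => p.1 - p.2) ⁻¹' E,
        ENNReal.ofReal (‖g p.1‖ ^ 2) * ENNReal.ofReal (‖g p.2‖ ^ 2) ∂(μ.prod μ)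
      ≤ 36 * A ^ 4 * μ E ^ (2/3 : ℝ) := by
  have hh : Measurable fun k => ‖g k‖ ^ 2 := hg.norm.pow_const 2
  have hh₁ : Measurable fun p : G × G => ‖g p.1‖ ^ 2 := hh.comp measurable_fst
  have hh₂ : Measurable fun p : G × G => ‖g p.2‖ ^ 2 := hh.comp measurable_snd
  set w : ℝ → ℝ≥0∞ := fun s => min (A ^ 3 * ENNReal.ofReal (s ^ (-(3/2) : ℝ)))
    ((μ E * A ^ 3) ^ (2⁻¹ : ℝ) * ENNReal.ofReal (s ^ (-(3/4) : ℝ)))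
  have hφ : ∀ s > (0 : ℝ), min (μ {k | s < ‖g k‖ ^ 2})
      ((μ E * μ {k | s < ‖g k‖ ^ 2}) ^ (2⁻¹ : ℝ)) ≤ w s := by
    intro s hs
    have hweak := measure_lt_norm_sq_le hA hs
    calc _ ≤ min (A ^ 3 * ENNReal.ofReal (s ^ (-(3/2) : ℝ)))
          ((μ E * (A ^ 3 * ENNReal.ofReal (s ^ (-(3/2) : ℝ)))) ^ (2⁻¹ : ℝ)) := by gcongr
      _ = w s := by
        rw [← mul_assoc, mul_rpow_of_nonneg _ _ (by norm_num),
          ENNReal.ofReal_rpow_of_nonneg (by positivity) (by norm_num), ← Real.rpow_mul hs.le]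
        simp only [w]
        norm_num
  have hlevel : ∀ s > (0 : ℝ), ∀ s' > (0 : ℝ),
      (μ.prod μ).restrict ((fun p : G × G => p.1 - p.2) ⁻¹' E)
        ({p | s < ‖g p.1‖ ^ 2} ∩ {p | s' < ‖g p.2‖ ^ 2}) ≤ w s * w s' := by
    intro s hs s' hs'
    rw [Measure.restrict_apply ((measurableSet_lt measurable_const hh₁).inter
      (measurableSet_lt measurable_const hh₂))]
    exact (measure_prod_inter_sub_preimage_le (measurableSet_lt measurable_const hh)
      (measurableSet_lt measurable_const hh) hE).trans (mul_le_mul' (hφ s hs) (hφ s' hs'))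
  calc _ ≤ ∫⁻ s in Ioi 0, ∫⁻ s' in Ioi 0, w s * w s' := by
        rw [lintegral_ofReal_mul_ofReal_eq_lintegral_lintegral_meas_lt _ hh₁ hh₂
          (fun _ => by positivity) (fun _ => by positivity)]
        exact setLIntegral_mono' measurableSet_Ioi fun s hs =>
          setLIntegral_mono' measurableSet_Ioi fun s' hs' => hlevel s hs s' hs'
    _ = (∫⁻ s in Ioi 0, w s) ^ 2 := by
        rw [sq, ← lintegral_mul_const _ (by fun_prop)]
        congr! 2 with s
        exact lintegral_const_mul _ (by fun_prop)
    _ ≤ (6 * (A ^ 3) ^ (1/3 : ℝ) * ((μ E * A ^ 3) ^ (2⁻¹ : ℝ)) ^ (2/3 : ℝ)) ^ 2 := by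
        gcongr
        exact lintegral_min_rpow_le _ _
    _ = 36 * A ^ 4 * (μ E ^ (1/3 : ℝ)) ^ 2 := by
        have hA3 : (A ^ 3) ^ (1/3 : ℝ) = A := by
          rw [← rpow_natCast, ← rpow_mul]; norm_num
        rw [← rpow_mul, mul_rpow_of_nonneg _ _ (by norm_num)]
        norm_num [hA3]
        ring
    _ = 36 * A ^ 4 * μ E ^ (2/3 : ℝ) := by
        rw [← rpow_mul_natCast]; norm_num

theorem lintegral_enorm_sub_mul_mul_le (hg : Measurable g)
    (hA : ∀ t > 0, μ {x | t < ‖g x‖} ^ (1/3 : ℝ) * ENNReal.ofReal t ≤ A)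
    {W : Type*} [NormedAddCommGroup W] [MeasurableSpace W] [OpensMeasurableSpace W]
    {F : G → W} (hF : Measurable F) :
    ∫⁻ p, ‖F (p.1 - p.2)‖ₑ ^ 2 * ‖g p.1‖ₑ ^ 2 * ‖g p.2‖ₑ ^ 2 ∂(μ.prod μ)
      ≤ 72 * A ^ 4 * ∫⁻ t in Ioi 0, μ {x | t < ‖F x‖} ^ (2/3 : ℝ) * ENNReal.ofReal t := by
  have hF' : Measurable fun p : G × G => ‖F (p.1 - p.2)‖ :=
    hF.norm.comp (measurable_fst.sub measurable_snd)
  have hdens : Measurable fun p : G × G =>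
      ENNReal.ofReal (‖g p.1‖ ^ 2) * ENNReal.ofReal (‖g p.2‖ ^ 2) := by fun_prop
  have hdist : Measurable fun t : ℝ => μ {x | t < ‖F x‖} :=
    Antitone.measurable fun s t hst => measure_mono fun x hx => hst.trans_lt hx
  have hdist' : Measurable fun t : ℝ => μ {x | t < ‖F x‖} ^ (2/3 : ℝ) * ENNReal.ofReal t :=
    (hdist.pow_const _).mul (by fun_prop)
  set ρ := (μ.prod μ).withDensity fun p =>
    ENNReal.ofReal (‖g p.1‖ ^ 2) * ENNReal.ofReal (‖g p.2‖ ^ 2)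
  calc _ = ∫⁻ p, ENNReal.ofReal (‖F (p.1 - p.2)‖ ^ (2 : ℝ)) ∂ρ := by
        rw [lintegral_withDensity_eq_lintegral_mul _ hdens (by fun_prop)]
        congr 1 with p
        simp only [Pi.mul_apply, Real.rpow_two, ENNReal.ofReal_pow (norm_nonneg _), ofReal_norm]
        ring
    _ = 2 * ∫⁻ t in Ioi 0, ρ {p | t < ‖F (p.1 - p.2)‖} * ENNReal.ofReal t := by
        rw [lintegral_rpow_eq_lintegral_meas_lt_mul _ (.of_forall fun _ => norm_nonneg _)
          hF'.aemeasurable two_pos]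
        norm_num
    _ ≤ 2 * ∫⁻ t in Ioi 0, 36 * A ^ 4 * μ {x | t < ‖F x‖} ^ (2/3 : ℝ) * ENNReal.ofReal t := by
        gcongr with t
        rw [withDensity_apply _ (measurableSet_lt measurable_const hF')]
        exact setLIntegral_sub_preimage_le hg hA (measurableSet_lt measurable_const hF.norm)
    _ = 72 * A ^ 4 * ∫⁻ t in Ioi 0, μ {x | t < ‖F x‖} ^ (2/3 : ℝ) * ENNReal.ofReal t := by
        simp_rw [mul_assoc (36 * A ^ 4)]
        rw [lintegral_const_mul _ hdist']
        ring

end DifferenceSets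

lemma measure_lt_norm_rpow_mul_le_lorentzNorm_top {d : ℕ} (p : ℝ) (f : Euc d → ℂ) {t : ℝ}
    (ht : 0 < t) : volume {k | t < ‖f k‖} ^ (1 / p) * ENNReal.ofReal t ≤ lorentzNorm p ⊤ f := by
  rw [lorentzNorm, if_pos rfl]
  exact le_iSup₂ (f := fun t (_ : t ∈ Ioi 0) =>
    volume {k | t < ‖f k‖} ^ (1 / p) * ENNReal.ofReal t) t ht

lemma lorentzNorm_two_sq {d : ℕ} (p : ℝ) (f : Euc d → ℂ) :
    lorentzNorm p 2 f ^ 2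
      = ENNReal.ofReal p * ∫⁻ t in Ioi 0, volume {k | t < ‖f k‖} ^ (2 / p) * ENNReal.ofReal t := by
  have hsq : ∀ x : ℝ≥0∞, (x ^ (1 / (2 : ℝ≥0∞).toReal)) ^ 2 = x := fun x => by
    rw [← rpow_mul_natCast]; norm_num
  rw [lorentzNorm, if_neg ofNat_ne_top, mul_pow, hsq, hsq]
  congr 1
  refine setLIntegral_congr_fun measurableSet_Ioi fun t ht => ?_
  have ht0 : ENNReal.ofReal t ≠ 0 := by simpa using ht
  rw [toReal_ofNat, mul_rpow_of_nonneg _ _ zero_le_two, ← rpow_mul, rpow_two, sq, ← mul_assoc,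
    ENNReal.mul_div_cancel_right ht0 ENNReal.ofReal_ne_top]
  ring_nf

/-- If `χ/ω ∈ L^{3,∞}(ℝ³)` and `F ∈ L^{3,2}(ℝ³)`, then
`(k,k') ↦ F(k−k') (χ(k)/ω(k)) (χ(k')/ω(k'))` lies in `L²(ℝ³×ℝ³)`, with norm
`≲ ‖χ/ω‖²_{L^{3,∞}} ‖F‖_{L^{3,2}}`. -/
theorem stmt9 :
    ∃ C > (0 : ℝ), ∀ (ω χ : Euc 3 → ℝ) (F : Euc 3 → ℂ),
      Measurable ω → Measurable χ → Measurable F →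
      lorentzNorm 3 ⊤ (fun k => ((χ k / ω k : ℝ) : ℂ)) < ⊤ →
      lorentzNorm 3 2 F < ⊤ →
      MeasureTheory.eLpNorm
          (fun kk : Euc 3 × Euc 3 =>
            F (kk.1 - kk.2) * ((χ kk.1 / ω kk.1 : ℝ) : ℂ) * ((χ kk.2 / ω kk.2 : ℝ) : ℂ))
          2 volume
        ≤ ENNReal.ofReal C * (lorentzNorm 3 ⊤ (fun k => ((χ k / ω k : ℝ) : ℂ))) ^ 2
            * lorentzNorm 3 2 F := by
  refine ⟨5, by norm_num, fun ω χ F hω hχ hF _ _ => ?_⟩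
  set A := lorentzNorm 3 ⊤ fun k => ((χ k / ω k : ℝ) : ℂ)
  have hA : ∀ t > 0, volume {k | t < ‖χ k / ω k‖} ^ (1/3 : ℝ) * ENNReal.ofReal t ≤ A :=
    fun t ht => by
      simpa only [Complex.norm_real] using
        measure_lt_norm_rpow_mul_le_lorentzNorm_top 3 (fun k => ((χ k / ω k : ℝ) : ℂ)) ht
  have hcast : ∀ x : ℝ, ‖(x : ℂ)‖ₑ = ‖x‖ₑ := fun x => by
    rw [← ofReal_norm, ← ofReal_norm, Complex.norm_real]
  have hsq : ∫⁻ p : Euc 3 × Euc 3,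
        ‖F (p.1 - p.2) * ((χ p.1 / ω p.1 : ℝ) : ℂ) * ((χ p.2 / ω p.2 : ℝ) : ℂ)‖ₑ ^ (2 : ℝ)
      ≤ (ENNReal.ofReal 5 * A ^ 2 * lorentzNorm 3 2 F) ^ 2 := by
    calc _ = ∫⁻ p, ‖F (p.1 - p.2)‖ₑ ^ 2 * ‖χ p.1 / ω p.1‖ₑ ^ 2 * ‖χ p.2 / ω p.2‖ₑ ^ 2
          ∂(volume.prod volume) := by
          simp_rw [Measure.volume_eq_prod, rpow_two, enorm_mul, mul_pow, hcast]
      _ ≤ 72 * A ^ 4 * ∫⁻ t in Ioi 0, volume {x | t < ‖F x‖} ^ (2/3 : ℝ) * ENNReal.ofReal t :=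
          lintegral_enorm_sub_mul_mul_le (hχ.div hω) hA hF
      _ ≤ _ := by
          rw [mul_pow, mul_pow, lorentzNorm_two_sq, ← pow_mul, ← ENNReal.ofReal_pow (by norm_num)]
          norm_num
          ring_nf
          gcongr
          norm_num
  rw [eLpNorm_eq_lintegral_rpow_enorm_toReal two_ne_zero ofNat_ne_top, toReal_ofNat]
  calc _ ≤ ((ENNReal.ofReal 5 * A ^ 2 * lorentzNorm 3 2 F) ^ 2) ^ (1 / (2 : ℝ)) :=
        ENNReal.rpow_le_rpow hsq (by norm_num)
    _ = _ := by rw [← rpow_natCast, ← rpow_mul]; norm_num
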